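/- Verdict locality (frozen verdicts): let A, B be AUFs with visibility-count functions C_A, C_B, and let C'_A, C'_B be alternative visibility-count functions that agree with C_A, C_B respectively on every round t ≤ H(A,B). Then the stopping times, maturity flags, and structural visibility precedence computed from the primed counts coincide with those computed from the unprimed counts: h'_A = h_A, h'_B = h_B, A is mature under C' iff under C (likewise B), and A ▷' B iff A ▷ B. In particular, once the committed frontier reaches H(A,B), the pairwise verdict is frozen and later committed rounds cannot change it. -/
import Mathlib


/-- An atomic unit of fairness (AUF), modeled by its creation round and its
creator-level structural visibility count per round. -/
structure AUF where
  r : ℕ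
  C : ℕ → ℕ

/-- Stopping time `h_X = min({t ≥ r(X) | C_X(t) ≥ 2f+1} ∪ {r(X)+W})`. -/
noncomputable def stopTime (f W : ℕ) (X : AUF) : ℕ :=
  sInf ({t | X.r ≤ t ∧ 2 * f + 1 ≤ X.C t} ∪ {X.r + W})

/-- `X` is mature iff `C_X(h_X) ≥ 2f+1`. -/
def mature (f W : ℕ) (X : AUF) : Prop :=
  2 * f + 1 ≤ X.C (stopTime f W X)

/-- Coexistence-alignment round `s(A,B) = max(r(A), r(B))`. -/
def coexist (A B : AUF) : ℕ := max A.r B.r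

/-- Pair horizon `H(A,B) = max(h_A, h_B)`. -/
noncomputable def horizon (f W : ℕ) (A B : AUF) : ℕ :=
  max (stopTime f W A) (stopTime f W B)

/-- Visibility delta `Δ(A,B,t) = C_A(t) − C_B(t)` (over ℤ). -/
def delta (A B : AUF) (t : ℕ) : ℤ := (A.C t : ℤ) - (B.C t : ℤ)

/-- Structural visibility precedence `A ▷ B`. -/
def SVP (f W : ℕ) (A B : AUF) : Prop :=
  mature f W A ∧ mature f W B ∧
  (∃ t, coexist A B < t ∧ t ≤ horizon f W A B ∧ (f + 1 : ℤ) ≤ delta A B t) ∧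
  ¬ ∃ t, coexist A B < t ∧ t ≤ horizon f W A B ∧ (f + 1 : ℤ) ≤ delta B A t

lemma stopTime_le (f W : ℕ) (X : AUF) : stopTime f W X ≤ X.r + W :=
  Nat.sInf_le (Or.inr rfl)

lemma stopTime_congr (f W : ℕ) (N : ℕ) (X X' : AUF) (hr : X'.r = X.r)
    (hC : ∀ t ≤ N, X'.C t = X.C t) (hN : stopTime f W X ≤ N) :
    stopTime f W X' = stopTime f W X := by
  set h := stopTime f W X with hh
  have hmem : h ∈ ({t | X.r ≤ t ∧ 2 * f + 1 ≤ X.C t} ∪ {X.r + W} : Set ℕ) := by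
    rw [hh, stopTime]
    exact Nat.sInf_mem ⟨X.r + W, Or.inr rfl⟩
  have hmem' : h ∈ ({t | X'.r ≤ t ∧ 2 * f + 1 ≤ X'.C t} ∪ {X'.r + W} : Set ℕ) := by
    rcases hmem with ⟨h1, h2⟩ | h1
    · exact Or.inl ⟨hr ▸ h1, (hC h hN) ▸ h2⟩
    · exact Or.inr (by simp [hr, h1])
  apply le_antisymm (Nat.sInf_le hmem')
  apply le_csInf ⟨X'.r + W, Or.inr rfl⟩
  intro t ht
  by_contra hlt
  push_neg at hlt
  have htN : t ≤ N := le_trans (le_of_lt hlt) hN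
  have : t ∈ ({t | X.r ≤ t ∧ 2 * f + 1 ≤ X.C t} ∪ {X.r + W} : Set ℕ) := by
    rcases ht with ⟨h1, h2⟩ | h1
    · exact Or.inl ⟨hr ▸ h1, (hC t htN) ▸ h2⟩
    · exact Or.inr (by simp at h1 ⊢; omega)
  have : stopTime f W X ≤ t := Nat.sInf_le this
  omega

/-- Verdict locality (frozen verdicts): if the alternative counts `C'` agree
with `C` on every round `t ≤ H(A,B)`, then stopping times, maturity flags, and
structural visibility precedence are unchanged; the pairwise verdict is frozen
once the committed frontier reaches `H(A,B)`. -/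
theorem verdict_locality (n f W : ℕ) (hn : 3 * f + 1 ≤ n)
    (A B A' B' : AUF) (hrA : A'.r = A.r) (hrB : B'.r = B.r)
    (hCA : ∀ t ≤ horizon f W A B, A'.C t = A.C t)
    (hCB : ∀ t ≤ horizon f W A B, B'.C t = B.C t) :
    stopTime f W A' = stopTime f W A ∧
    stopTime f W B' = stopTime f W B ∧
    (mature f W A' ↔ mature f W A) ∧
    (mature f W B' ↔ mature f W B) ∧
    (SVP f W A' B' ↔ SVP f W A B) := by
  have hA : stopTime f W A' = stopTime f W A :=
    stopTime_congr f W (horizon f W A B) A A' hrA hCA (le_max_left _ _)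
  have hB : stopTime f W B' = stopTime f W B :=
    stopTime_congr f W (horizon f W A B) B B' hrB hCB (le_max_right _ _)
  have hHor : horizon f W A' B' = horizon f W A B := by
    rw [horizon, hA, hB]; rfl
  have hmA : mature f W A' ↔ mature f W A := by
    rw [mature, mature, hA, hCA _ (le_max_left _ _)]
  have hmB : mature f W B' ↔ mature f W B := by
    rw [mature, mature, hB, hCB _ (le_max_right _ _)]
  have hco : coexist A' B' = coexist A B := by rw [coexist, coexist, hrA, hrB]
  have hd : ∀ t ≤ horizon f W A B, delta A' B' t = delta A B t ∧ delta B' A' t = delta B A t := by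
    intro t ht
    constructor <;> rw [delta, delta, hCA t ht, hCB t ht]
  refine ⟨hA, hB, hmA, hmB, ?_⟩
  rw [SVP, SVP, hHor, hco, hmA, hmB]
  constructor
  · rintro ⟨m1, m2, ⟨t, h1, h2, h3⟩, h4⟩
    refine ⟨m1, m2, ⟨t, h1, h2, ((hd t h2).1) ▸ h3⟩, ?_⟩
    rintro ⟨t, g1, g2, g3⟩
    exact h4 ⟨t, g1, g2, ((hd t g2).2) ▸ g3⟩
  · rintro ⟨m1, m2, ⟨t, h1, h2, h3⟩, h4⟩
    refine ⟨m1, m2, ⟨t, h1, h2, ((hd t h2).1) ▸ h3⟩, ?_⟩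
    rintro ⟨t, g1, g2, g3⟩
    exact h4 ⟨t, g1, g2, ((hd t g2).2) ▸ g3⟩
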